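/- For any essentially bounded measurable f, the essential supremum over C (with respect to μ^N) of |(1/N)·∑_{n : x_n ∈ M_j} f(x_n) − ∫_{M_j} f dμ| is at most μ(M_j)·(G_j(f) − g_j(f)), for each 1 ≤ j ≤ k. -/

import Mathlib

open MeasureTheory

/-- `Gj μ f M` is the essential upper bound `G_j(f)` of `f` on `M`:
`-inf_{x∈M} f⁻` if `f⁺ = 0` μ-a.e. on `M`, and `esssup_{M} f⁺` otherwise. -/
noncomputable def Gj {X : Type*} [MeasurableSpace X] (μ : Measure X)
    (f : X → ℝ) (M : Set X) : ℝ :=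
  if μ {x | x ∈ M ∧ 0 < max (f x) 0} = 0 then
    -(sInf ((fun x => max (-(f x)) 0) '' M))
  else essSup (fun x => max (f x) 0) (μ.restrict M)

/-- `gj μ f M` is the essential lower bound `g_j(f)` of `f` on `M`:
`inf_{x∈M} f⁺` if `f⁻ = 0` μ-a.e. on `M`, and `-esssup_{M} f⁻` otherwise. -/
noncomputable def gj {X : Type*} [MeasurableSpace X] (μ : Measure X)
    (f : X → ℝ) (M : Set X) : ℝ :=
  if μ {x | x ∈ M ∧ 0 < max (-(f x)) 0} = 0 then
    sInf ((fun x => max (f x) 0) '' M)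
  else -(essSup (fun x => max (-(f x)) 0) (μ.restrict M))

/-! A.e. on `M j` the function `f` lies between `gj` and `Gj`. Hence `∫_{M j} f` lies in
`[μ(M j)·gj, μ(M j)·Gj]`, and so does the partial average at almost every uniform tuple: such a
tuple has exactly `μ(M j)·N` points in `M j`, and almost surely none of its points falls into the
exceptional null set. Two numbers in the same interval differ by at most its length. -/

open Filter Set

section Bounds

variable {X : Type*} [MeasurableSpace X] (μ : Measure X)

lemma isBoundedUnder_abs_of_memLp_top {f : X → ℝ} (hf : MemLp f ⊤ μ) :
    IsBoundedUnder (· ≤ ·) (ae μ) fun t => |f t| := by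
  have h := hf.eLpNorm_lt_top
  rw [eLpNorm_exponent_top, eLpNormEssSup_lt_top_iff_isBoundedUnder] at h
  exact NNReal.coe_mono.isBoundedUnder_le_comp h

lemma gj_eq_neg_Gj_neg (f : X → ℝ) (M : Set X) : gj μ f M = -Gj μ (-f) M := by
  simp only [gj, Gj, Pi.neg_apply, neg_neg]
  split_ifs <;> simp

lemma ae_le_Gj {f : X → ℝ} (hf : IsBoundedUnder (· ≤ ·) (ae μ) f) (M : Set X) :
    ∀ᵐ t ∂μ, t ∈ M → f t ≤ Gj μ f M := by
  unfold Gj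
  split_ifs with h
  · filter_upwards [measure_eq_zero_iff_ae_notMem.mp h] with t ht htM
    have hft : f t ≤ 0 := by
      by_contra! hpos
      exact ht ⟨htM, lt_max_of_lt_left hpos⟩
    have hbdd : BddBelow ((fun x => max (-(f x)) 0) '' M) :=
      ⟨0, forall_mem_image.2 fun _ _ => le_max_right _ _⟩
    have hinf := csInf_le hbdd (mem_image_of_mem _ htM)
    rw [max_eq_left (neg_nonneg.2 hft)] at hinf
    linarith
  · have hbdd : IsBoundedUnder (· ≤ ·) (ae (μ.restrict M)) fun x => max (f x) 0 :=
      (hf.mono ae_restrict_le).sup isBoundedUnder_const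
    filter_upwards [ae_imp_of_ae_restrict (ae_le_essSup hbdd)] with t ht htM
    exact (le_max_left _ _).trans (ht htM)

lemma ae_gj_le {f : X → ℝ} (hf : IsBoundedUnder (· ≥ ·) (ae μ) f) (M : Set X) :
    ∀ᵐ t ∂μ, t ∈ M → gj μ f M ≤ f t := by
  filter_upwards [ae_le_Gj μ (isBoundedUnder_le_neg.2 hf) M] with t ht htM
  rw [gj_eq_neg_Gj_neg]
  exact neg_le.1 (ht htM)

end Bounds

lemma setIntegral_mem_Icc {X : Type*} [MeasurableSpace X] {μ : Measure X} {s : Set X}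
    {f : X → ℝ} {a b : ℝ} (hs : MeasurableSet s) (hμs : μ s ≠ ⊤) (hf : IntegrableOn f s μ)
    (h : ∀ᵐ t ∂μ, t ∈ s → f t ∈ Icc a b) :
    ∫ t in s, f t ∂μ ∈ Icc (μ.real s * a) (μ.real s * b) := by
  constructor
  · rw [← smul_eq_mul, ← setIntegral_const]
    exact setIntegral_mono_on_ae (integrableOn_const hμs) hf hs (h.mono fun _ h hs => (h hs).1)
  · rw [← smul_eq_mul, ← setIntegral_const]
    exact setIntegral_mono_on_ae hf (integrableOn_const hμs) hs (h.mono fun _ h hs => (h hs).2)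

lemma ae_pi_forall_apply {ι X : Type*} [Fintype ι] [MeasurableSpace X] {μ : Measure X}
    [SigmaFinite μ] {p : X → Prop} (h : ∀ᵐ t ∂μ, p t) :
    ∀ᵐ x ∂Measure.pi (fun _ : ι => μ), ∀ i, p (x i) :=
  ae_all_iff.2 fun _ => Measure.tendsto_eval_ae_ae.eventually h

lemma sum_indicator_mem_Icc {ι X : Type*} (s : Finset ι) (M : Set X) (f : X → ℝ) (x : ι → X)
    {a b : ℝ} (h : ∀ i ∈ s, x i ∈ M → f (x i) ∈ Icc a b) :
    ∑ i ∈ s, M.indicator f (x i) ∈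
      Icc (a * ∑ i ∈ s, M.indicator (fun _ => (1 : ℝ)) (x i))
        (b * ∑ i ∈ s, M.indicator (fun _ => (1 : ℝ)) (x i)) := by
  simp only [Finset.mul_sum]
  refine ⟨Finset.sum_le_sum fun i hi => ?_, Finset.sum_le_sum fun i hi => ?_⟩ <;>
    by_cases hx : x i ∈ M <;> simp_all

lemma average_indicator_mem_Icc {X : Type*} {N : ℕ} (hN : 0 < N) {M : Set X} {f : X → ℝ}
    {x : Fin N → X} {m a b : ℝ}
    (hcount : ∑ n, M.indicator (fun _ => (1 : ℝ)) (x n) = m * N)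
    (h : ∀ n, x n ∈ M → f (x n) ∈ Icc a b) :
    (1 / (N : ℝ)) * ∑ n, M.indicator f (x n) ∈ Icc (m * a) (m * b) := by
  have hN' : (0 : ℝ) < N := Nat.cast_pos.2 hN
  obtain ⟨hlo, hhi⟩ := sum_indicator_mem_Icc Finset.univ M f x fun n _ => h n
  rw [hcount] at hlo hhi
  rw [one_div, mem_Icc, le_inv_mul_iff₀ hN', inv_mul_le_iff₀ hN']
  constructor <;> linarith

theorem partial_error_le_local_spread_general
    {X : Type*} [MeasurableSpace X] (μ : Measure X) [IsProbabilityMeasure μ]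
    (k : ℕ) (M : Fin k → Set X)
    (hMmeas : ∀ j, MeasurableSet (M j))
    (N : ℕ) (hN : 0 < N)
    (C : Set (Fin N → X))
    (hC : C = {x : Fin N → X | ∀ j : Fin k,
      ∑ n : Fin N, Set.indicator (M j) (fun _ => (1 : ℝ)) (x n) = (μ (M j)).toReal * N})
    (f : X → ℝ) (hf : MemLp f ⊤ μ) :
    ∀ j : Fin k,
      ∀ᵐ x ∂((Measure.pi (fun _ : Fin N => μ)).restrict C),
        |(1 / (N : ℝ)) * ∑ n : Fin N, Set.indicator (M j) f (x n)
            - ∫ t in M j, f t ∂μ|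
          ≤ (μ (M j)).toReal * (Gj μ f (M j) - gj μ f (M j)) := by
  intro j
  obtain ⟨hf_le, hf_ge⟩ := isBoundedUnder_le_abs.1 (isBoundedUnder_abs_of_memLp_top μ hf)
  have hfM : ∀ᵐ t ∂μ, t ∈ M j → f t ∈ Icc (gj μ f (M j)) (Gj μ f (M j)) := by
    filter_upwards [ae_gj_le μ hf_ge (M j), ae_le_Gj μ hf_le (M j)] with t hg hG ht
    exact ⟨hg ht, hG ht⟩
  have hint := setIntegral_mem_Icc (hMmeas j) (measure_ne_top μ _)
    (hf.integrable le_top).integrableOn hfM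
  have hCmeas : MeasurableSet C := by
    rw [hC, Set.ofPred_forall]
    exact .iInter fun i => measurableSet_eq_fun (Finset.measurable_sum _ fun n _ =>
      (measurable_const.indicator (hMmeas i)).comp (measurable_pi_apply n)) measurable_const
  filter_upwards [ae_restrict_mem hCmeas, ae_restrict_of_ae (ae_pi_forall_apply hfM)]
    with x hxC hx
  rw [hC] at hxC
  have havg := average_indicator_mem_Icc hN (hxC j) hx
  calc _ = dist _ _ := (Real.dist_eq _ _).symm
    _ ≤ _ := Real.dist_le_of_mem_Icc havg hint
    _ = _ := (mul_sub _ _ _).symm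

/-- For f ∈ L^∞, a.e. on the set C of (𝓜, μ)-uniform tuples (w.r.t. μ^N),
the error of the partial average over points in M_j against ∫_{M_j} f dμ is at most
μ(M_j)·(G_j(f) − g_j(f)), for each j. -/
theorem partial_error_le_local_spread
    {X : Type*} [MeasurableSpace X] (μ : Measure X) [IsProbabilityMeasure μ]
    (k : ℕ) (hk : 0 < k) (M : Fin k → Set X)
    (hMmeas : ∀ j, MeasurableSet (M j))
    (hMdisj : Pairwise (Function.onFun Disjoint M))
    (hMcover : ⋃ j, M j = Set.univ)
    (N : ℕ) (hN : 0 < N)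
    (C : Set (Fin N → X))
    (hC : C = {x : Fin N → X | ∀ j : Fin k,
      ∑ n : Fin N, Set.indicator (M j) (fun _ => (1 : ℝ)) (x n) = (μ (M j)).toReal * N})
    (f : X → ℝ) (hf : MemLp f ⊤ μ) :
    ∀ j : Fin k,
      ∀ᵐ x ∂((Measure.pi (fun _ : Fin N => μ)).restrict C),
        |(1 / (N : ℝ)) * ∑ n : Fin N, Set.indicator (M j) f (x n)
            - ∫ t in M j, f t ∂μ|
          ≤ (μ (M j)).toReal * (Gj μ f (M j) - gj μ f (M j)) :=
  partial_error_le_local_spread_general μ k M hMmeas N hN C hC f hf
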